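/- Let G be a König-Egerváry graph. Then every maximum stable set S of G meets each μ-critical edge of G in exactly one vertex, and likewise meets each α-critical edge of G in exactly one vertex (i.e., for each such edge, exactly one of its two endpoints lies in S). -/

import Mathlib

open scoped Classical

namespace KEG

variable {V : Type*}

/-- `S` is a stable (independent) set of vertices of `G`. -/
def IsStable (G : SimpleGraph V) (S : Finset V) : Prop :=
  ∀ ⦃x⦄, x ∈ S → ∀ ⦃y⦄, y ∈ S → ¬G.Adj x y

/-- The stability number `α(G)`: maximum cardinality of a stable set. -/
noncomputable def alphaNum (G : SimpleGraph V) : ℕ :=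
  sSup {n | ∃ S : Finset V, IsStable G S ∧ S.card = n}

/-- `S` is a maximum stable set of `G`. -/
def IsMaxStable (G : SimpleGraph V) (S : Finset V) : Prop :=
  IsStable G S ∧ S.card = alphaNum G

/-- `M` is a matching of `G`: a set of edges of `G`, pairwise non-incident. -/
def IsMatching (G : SimpleGraph V) (M : Finset (Sym2 V)) : Prop :=
  (∀ e ∈ M, e ∈ G.edgeSet) ∧
    ∀ e ∈ M, ∀ f ∈ M, e ≠ f → ∀ v : V, v ∈ e → v ∉ f

/-- The matching number `μ(G)`: maximum cardinality of a matching. -/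
noncomputable def muNum (G : SimpleGraph V) : ℕ :=
  sSup {n | ∃ M : Finset (Sym2 V), IsMatching G M ∧ M.card = n}

/-- A perfect matching: a matching covering every vertex. -/
def IsPerfectMatching (G : SimpleGraph V) (M : Finset (Sym2 V)) : Prop :=
  IsMatching G M ∧ ∀ v : V, ∃ e ∈ M, v ∈ e

/-- A maximal matching: a matching such that no edge of `G` can be added to it
while keeping pairwise non-incidence, i.e. every edge of `G` outside `M` is
incident to an edge of `M`. -/
def IsMaximalMatching (G : SimpleGraph V) (M : Finset (Sym2 V)) : Prop :=
  IsMatching G M ∧ ∀ e ∈ G.edgeSet, e ∉ M → ∃ f ∈ M, ∃ v : V, v ∈ e ∧ v ∈ f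

/-- `G` is a König-Egerváry graph: `α(G) + μ(G) = |V(G)|`. -/
def KonigEgervary (G : SimpleGraph V) [Fintype V] : Prop :=
  alphaNum G + muNum G = Fintype.card V

/-- `e` is an α-critical edge of `G`: `α(G - e) > α(G)`. -/
def IsAlphaCritical (G : SimpleGraph V) (e : Sym2 V) : Prop :=
  e ∈ G.edgeSet ∧ alphaNum G < alphaNum (G.deleteEdges {e})

/-- `e` is a μ-critical edge of `G`: `μ(G - e) < μ(G)`. -/
def IsMuCritical (G : SimpleGraph V) (e : Sym2 V) : Prop :=
  e ∈ G.edgeSet ∧ muNum (G.deleteEdges {e}) < muNum G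

/-- `core(G)`: the set of vertices belonging to every maximum stable set of `G`. -/
def core (G : SimpleGraph V) : Set V :=
  {v | ∀ S : Finset V, IsMaxStable G S → v ∈ S}

/-- `ξ(G) = |core(G)|`. -/
noncomputable def xi (G : SimpleGraph V) : ℕ := (core G).ncard

/-- `σ(G)`: the number of vertices belonging to no maximum stable set of `G`. -/
noncomputable def sigmaNum (G : SimpleGraph V) : ℕ :=
  {v : V | ∀ S : Finset V, IsMaxStable G S → v ∉ S}.ncard

/-- `η(G)`: the number of α-critical edges of `G`. -/
noncomputable def eta (G : SimpleGraph V) : ℕ :=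
  {e : Sym2 V | IsAlphaCritical G e}.ncard

/-- `N(A)`: the set of vertices adjacent to some vertex of `A`. -/
def nbhd (G : SimpleGraph V) (A : Set V) : Set V :=
  {v | ∃ a ∈ A, G.Adj a v}

/-- `N[A] = A ∪ N(A)`: the closed neighborhood of `A`. -/
def closedNbhd (G : SimpleGraph V) (A : Set V) : Set V :=
  A ∪ nbhd G A

/-!
Every edge of a matching `M` has an endpoint outside a stable set `S`, and distinct edges of `M`
have disjoint endpoints, so `|M| ≤ |V| - |S|`; in particular `α + μ ≤ |V|` in every graph. In a
König-Egerváry graph this is an equality for `S` maximum stable and `M` maximum, which forces every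
edge of `M` to have exactly one endpoint outside `S`, hence exactly one in `S`. A μ-critical edge
lies in every maximum matching, and an α-critical edge is μ-critical because `α + μ ≤ |V|` also
holds in `G - e`.
-/

lemma bddAbove_stableCards (G : SimpleGraph V) [Fintype V] :
    BddAbove {n | ∃ S : Finset V, IsStable G S ∧ S.card = n} :=
  ⟨Fintype.card V, by rintro n ⟨S, -, rfl⟩; exact S.card_le_univ⟩

lemma bddAbove_matchingCards (G : SimpleGraph V) [Fintype V] :
    BddAbove {n | ∃ M : Finset (Sym2 V), IsMatching G M ∧ M.card = n} :=
  ⟨Fintype.card (Sym2 V), by rintro n ⟨M, -, rfl⟩; exact M.card_le_univ⟩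

lemma exists_isMaxStable (G : SimpleGraph V) [Fintype V] : ∃ S : Finset V, IsMaxStable G S :=
  Nat.sSup_mem (s := {n | ∃ S : Finset V, IsStable G S ∧ S.card = n})
    ⟨0, ∅, by simp [IsStable]⟩ (bddAbove_stableCards G)

lemma exists_isMatching_card_eq_muNum (G : SimpleGraph V) [Fintype V] :
    ∃ M : Finset (Sym2 V), IsMatching G M ∧ M.card = muNum G :=
  Nat.sSup_mem (s := {n | ∃ M : Finset (Sym2 V), IsMatching G M ∧ M.card = n})
    ⟨0, ∅, by simp [IsMatching]⟩ (bddAbove_matchingCards G)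

lemma IsMatching.card_le_muNum {G : SimpleGraph V} [Fintype V] {M : Finset (Sym2 V)}
    (hM : IsMatching G M) : M.card ≤ muNum G :=
  le_csSup (bddAbove_matchingCards G) ⟨M, hM, rfl⟩

section Counting

open Finset

variable {G : SimpleGraph V} {S : Finset V} {M : Finset (Sym2 V)}

lemma IsStable.nonempty_toFinset_sdiff (hS : IsStable G S) {f : Sym2 V} (hf : f ∈ G.edgeSet) :
    (f.toFinset \ S).Nonempty := by
  induction f with
  | _ x y =>
    by_cases hx : x ∈ S
    · exact ⟨y, by simpa using fun hy => hS hx hy hf⟩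
    · exact ⟨x, by simpa using hx⟩

lemma IsMatching.pairwiseDisjoint_toFinset_sdiff (hM : IsMatching G M) (S : Finset V) :
    (M : Set (Sym2 V)).PairwiseDisjoint fun f => f.toFinset \ S := by
  intro f hf g hg hne
  refine disjoint_left.2 fun v hvf hvg => ?_
  simp only [mem_sdiff, Sym2.mem_toFinset] at hvf hvg
  exact hM.2 f hf g hg hne v hvf.1 hvg.1

lemma IsMatching.sum_card_toFinset_sdiff_le [Fintype V] (hM : IsMatching G M) (S : Finset V) :
    ∑ f ∈ M, #(f.toFinset \ S) ≤ Fintype.card V - #S := by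
  rw [← card_biUnion (hM.pairwiseDisjoint_toFinset_sdiff S), ← card_compl]
  exact card_le_card <| biUnion_subset.2 fun f _ => sdiff_subset_sdiff (subset_univ _) le_rfl

lemma card_add_card_le_of_isStable_of_isMatching [Fintype V] (hS : IsStable G S)
    (hM : IsMatching G M) : #S + #M ≤ Fintype.card V := by
  have : #M ≤ Fintype.card V - #S := calc
    #M = ∑ f ∈ M, 1 := card_eq_sum_ones M
    _ ≤ ∑ f ∈ M, #(f.toFinset \ S) :=
      sum_le_sum fun f hf => (hS.nonempty_toFinset_sdiff (hM.1 f hf)).card_pos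
    _ ≤ Fintype.card V - #S := hM.sum_card_toFinset_sdiff_le S
  have := S.card_le_univ
  omega

lemma card_toFinset_sdiff_eq_one_of_card_add_card_eq [Fintype V] (hS : IsStable G S)
    (hM : IsMatching G M) (hcard : #S + #M = Fintype.card V) {f : Sym2 V} (hf : f ∈ M) :
    #(f.toFinset \ S) = 1 := by
  have hle : ∀ g ∈ M, 1 ≤ #(g.toFinset \ S) := fun g hg =>
    (hS.nonempty_toFinset_sdiff (hM.1 g hg)).card_pos
  have hsum : ∑ g ∈ M, 1 = ∑ g ∈ M, #(g.toFinset \ S) :=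
    le_antisymm (sum_le_sum hle) <| by
      simpa [← hcard] using hM.sum_card_toFinset_sdiff_le S
  exact ((sum_eq_sum_iff_of_le hle).1 hsum f hf).symm

lemma existsUnique_mem_of_card_toFinset_sdiff_eq_one {f : Sym2 V}
    (hf : f ∈ G.edgeSet) (h : #(f.toFinset \ S) = 1) : ∃! v, v ∈ f ∧ v ∈ S := by
  have hinter : #(f.toFinset ∩ S) = 1 := by
    have := card_sdiff_add_card_inter f.toFinset S
    rw [Sym2.card_toFinset_of_not_isDiag f (G.not_isDiag_of_mem_edgeSet hf)] at this
    omega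
  obtain ⟨v, hv⟩ := card_eq_one.1 hinter
  have hmem : ∀ w, w ∈ f ∧ w ∈ S ↔ w = v := fun w => by
    rw [← Sym2.mem_toFinset, ← mem_inter, hv, mem_singleton]
  exact ⟨v, (hmem v).2 rfl, fun w hw => (hmem w).1 hw⟩

end Counting

lemma alphaNum_add_muNum_le (G : SimpleGraph V) [Fintype V] :
    alphaNum G + muNum G ≤ Fintype.card V := by
  obtain ⟨S, hS, hScard⟩ := exists_isMaxStable G
  obtain ⟨M, hM, hMcard⟩ := exists_isMatching_card_eq_muNum G
  simpa [hScard, hMcard] using card_add_card_le_of_isStable_of_isMatching hS hM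

lemma IsAlphaCritical.isMuCritical {G : SimpleGraph V} [Fintype V] (hG : KonigEgervary G)
    {e : Sym2 V} (h : IsAlphaCritical G e) : IsMuCritical G e := by
  refine ⟨h.1, ?_⟩
  have := alphaNum_add_muNum_le (G.deleteEdges {e})
  have := h.2
  unfold KonigEgervary at hG
  omega

lemma IsMuCritical.mem_of_isMatching_card_eq {G : SimpleGraph V} [Fintype V] {e : Sym2 V}
    (he : IsMuCritical G e) {M : Finset (Sym2 V)} (hM : IsMatching G M)
    (hcard : M.card = muNum G) : e ∈ M := by
  by_contra heM
  have hM' : IsMatching (G.deleteEdges {e}) M :=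
    ⟨fun f hf => by
      rw [SimpleGraph.edgeSet_deleteEdges]
      exact ⟨hM.1 f hf, by rintro rfl; exact heM hf⟩, hM.2⟩
  have := hM'.card_le_muNum
  have := he.2
  omega

/-- In a König-Egerváry graph, any maximum stable set meets each μ-critical
edge, and each α-critical edge, in exactly one vertex. -/
theorem stmt_6 {V : Type*} [Fintype V] (G : SimpleGraph V)
    (hG : KonigEgervary G) (S : Finset V) (hS : IsMaxStable G S)
    (e : Sym2 V) (he : IsMuCritical G e ∨ IsAlphaCritical G e) :
    ∃! v : V, v ∈ e ∧ v ∈ S := by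
  have he : IsMuCritical G e := he.elim id (·.isMuCritical hG)
  obtain ⟨M, hM, hMcard⟩ := exists_isMatching_card_eq_muNum G
  have heM : e ∈ M := he.mem_of_isMatching_card_eq hM hMcard
  have hcard : S.card + M.card = Fintype.card V := by rw [hS.2, hMcard]; exact hG
  exact existsUnique_mem_of_card_toFinset_sdiff_eq_one he.1
    (card_toFinset_sdiff_eq_one_of_card_add_card_eq hS.1 hM hcard heM)

end KEG
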